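/- The Dyck language of well-nested brackets over {[, ]} is accepted by a pebble-intervals automaton with one pebble: the PIA with states {q_[, q_]}, initial and accepting state q_], and transitions (q_], move(1; ▷, ◁), [, q_[) and (q_[, move(1; 1, ◁), ], q_]) accepts a string iff it has equally many left and right brackets and no prefix has more right than left brackets. -/

import Mathlib

/-- A pebble-intervals automaton (PIA): alphabet `α`, `m` pebbles, states `Q`,
initial state `qinit`, accepting states `F`, silent transitions `silent` and
move transitions `move q k i j a q'` where `i = none` denotes the left boundary ▷
and `j = none` denotes the right boundary ◁. -/
structure PIA (α : Type) where
  m : ℕ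
  Q : Type
  qinit : Q
  F : Set Q
  silent : Q → Q → Prop
  move : Q → Fin m → Option (Fin m) → Option (Fin m) → α → Q → Prop

/-- A configuration of a PIA on a string of length `n`: current state, pebble
assignment, and set of already-read positions. -/
structure PIAConfig {α : Type} (A : PIA α) (n : ℕ) where
  q : A.Q
  ρ : Fin A.m → Option (Fin n)
  N : Set (Fin n)

/-- Pebble `i` (or the left boundary, if `i = none`) lies strictly left of `ℓ`. -/
def leftOK {m n : ℕ} (ρ : Fin m → Option (Fin n)) (i : Option (Fin m)) (ℓ : Fin n) : Prop :=
  match i with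
  | none => True
  | some p => ∃ pi, ρ p = some pi ∧ pi < ℓ

/-- Pebble `j` (or the right boundary, if `j = none`) lies strictly right of `ℓ`. -/
def rightOK {m n : ℕ} (ρ : Fin m → Option (Fin n)) (j : Option (Fin m)) (ℓ : Fin n) : Prop :=
  match j with
  | none => True
  | some p => ∃ pj, ρ p = some pj ∧ ℓ < pj

/-- One step of a PIA on input `u`: either a silent transition, or a move
transition placing pebble `k` on an unread position strictly between `i` and `j`,
reading the letter there. -/
def PIAStep {α : Type} (A : PIA α) {n : ℕ} (u : Fin n → α)
    (c c' : PIAConfig A n) : Prop :=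
  (A.silent c.q c'.q ∧ c'.ρ = c.ρ ∧ c'.N = c.N) ∨
  (∃ (k : Fin A.m) (i j : Option (Fin A.m)) (ℓ : Fin n),
    A.move c.q k i j (u ℓ) c'.q ∧ ℓ ∉ c.N ∧
    leftOK c.ρ i ℓ ∧ rightOK c.ρ j ℓ ∧
    c'.ρ = Function.update c.ρ k (some ℓ) ∧ c'.N = insert ℓ c.N)

/-- The initial configuration: initial state, no pebbles placed, nothing read. -/
def PIAInit {α : Type} (A : PIA α) (n : ℕ) : PIAConfig A n :=
  ⟨A.qinit, fun _ => none, ∅⟩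

/-- A PIA accepts a string `u` if some computation from the initial configuration
reads all positions of `u` and ends in an accepting state. -/
def PIA.Accepts {α : Type} (A : PIA α) (u : List α) : Prop :=
  ∃ c : PIAConfig A u.length,
    Relation.ReflTransGen (PIAStep A u.get) (PIAInit A u.length) c ∧
    c.q ∈ A.F ∧ c.N = Set.univ

/-- The two bracket symbols. -/
inductive Brkt : Type
  | l  -- the left bracket `[`
  | r  -- the right bracket `]`
deriving DecidableEq

/-- The one-pebble PIA for the Dyck language: states `q_[` (= `false`) and
`q_]` (= `true`), initial and accepting state `q_]`, with transitions
`(q_], move(1; ▷, ◁), [, q_[)` and `(q_[, move(1; 1, ◁), ], q_])`. -/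
def dyckPIA : PIA Brkt where
  m := 1
  Q := Bool
  qinit := true
  F := {true}
  silent := fun _ _ => False
  move := fun q k i j a q' =>
    (q = true ∧ i = none ∧ j = none ∧ a = Brkt.l ∧ q' = false) ∨
    (q = false ∧ i = some k ∧ j = none ∧ a = Brkt.r ∧ q' = true)

/-!
In state `q_]` the pebble may go on any unread `[`, in state `q_[` it must move right to an unread
`]`, so an accepting run reads the word as a sequence of pairs `[ … ]` with the `[` to the left.
Adding such a pair to a set of positions never lowers its height profile, so the set of read
positions stays balanced (it spells a Dyck word) and an accepting run shows that the whole word is.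
Conversely, a nonempty balanced set contains a pair whose removal leaves it balanced: its first `]`
with any earlier `[`, because before that `]` the rest consists of `[` only.
-/

def Brkt.sign : Brkt → ℤ
  | .l => 1
  | .r => -1

section Balanced

variable {n : ℕ} (u : Fin n → Brkt)

def height (S : Finset (Fin n)) (t : ℕ) : ℤ :=
  ∑ i ∈ S.filter (fun i : Fin n => (i : ℕ) < t), (u i).sign

def IsBalanced (S : Finset (Fin n)) : Prop :=
  (∀ t, 0 ≤ height u S t) ∧ height u S n = 0

variable {u}

lemma height_insert {S : Finset (Fin n)} {a : Fin n} (ha : a ∉ S) (t : ℕ) :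
    height u (insert a S) t = height u S t + if (a : ℕ) < t then (u a).sign else 0 := by
  unfold height
  rw [Finset.filter_insert]
  split_ifs
  · rw [Finset.sum_insert (by simp [ha]), add_comm]
  · rw [add_zero]

lemma height_insert_insert {S : Finset (Fin n)} {a b : Fin n} (hab : a < b) (ha : a ∉ S)
    (hb : b ∉ S) (t : ℕ) :
    height u (insert a (insert b S)) t = height u S t
      + (if (a : ℕ) < t then (u a).sign else 0) + (if (b : ℕ) < t then (u b).sign else 0) := by
  rw [height_insert (by simp [ha, hab.ne]), height_insert hb]
  ring

lemma height_eq_card {S : Finset (Fin n)} {t : ℕ} (h : ∀ i ∈ S, (i : ℕ) < t → u i = .l) :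
    height u S t = (S.filter fun i : Fin n => (i : ℕ) < t).card := by
  rw [height, Finset.card_eq_sum_ones, Nat.cast_sum]
  refine Finset.sum_congr rfl fun i hi => ?_
  rw [Finset.mem_filter] at hi
  simp [h i hi.1 hi.2, Brkt.sign]

lemma isBalanced_empty : IsBalanced u ∅ := by
  simp [IsBalanced, height]

lemma IsBalanced.insert_insert {S : Finset (Fin n)} (hS : IsBalanced u S) {a b : Fin n}
    (hab : a < b) (ha : u a = .l) (hb : u b = .r) (haS : a ∉ S) (hbS : b ∉ S) :
    IsBalanced u (insert a (insert b S)) := by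
  have hab' : (a : ℕ) < b := hab
  refine ⟨fun t => ?_, ?_⟩
  · rw [height_insert_insert hab haS hbS, ha, hb]
    simp only [Brkt.sign]
    have := hS.1 t
    split_ifs <;> omega
  · rw [height_insert_insert hab haS hbS, hS.2, if_pos a.isLt, if_pos b.isLt, ha, hb]
    rfl

lemma IsBalanced.exists_right {S : Finset (Fin n)} (hS : IsBalanced u S) (hne : S.Nonempty) :
    ∃ b ∈ S, u b = .r := by
  by_contra! h
  have hl : ∀ i ∈ S, (i : ℕ) < n → u i = .l := fun i hi _ => by
    cases hi' : u i
    · rfl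
    · exact absurd hi' (h i hi)
  have h0 := hS.2
  rw [height_eq_card hl, Finset.filter_true_of_mem fun i _ => i.isLt] at h0
  exact hne.card_pos.ne' (by exact_mod_cast h0)

lemma IsBalanced.exists_insert_insert {S : Finset (Fin n)} (hS : IsBalanced u S)
    (hne : S.Nonempty) :
    ∃ a b S', a < b ∧ u a = .l ∧ u b = .r ∧ a ∉ S' ∧ b ∉ S' ∧
      S = insert a (insert b S') ∧ IsBalanced u S' := by
  obtain ⟨b, hb, hbmin⟩ := (S.filter (u · = .r)).exists_min_image id <| by
    obtain ⟨b, hbS, hbr⟩ := hS.exists_right hne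
    exact ⟨b, Finset.mem_filter.2 ⟨hbS, hbr⟩⟩
  simp only [Finset.mem_filter, id] at hb hbmin
  have hl : ∀ i ∈ S.erase b, (i : ℕ) < b + 1 → u i = .l := by
    intro i hi hib
    rw [Finset.mem_erase] at hi
    cases hu : u i
    · rfl
    · exact absurd (le_antisymm (Fin.le_def.2 (Nat.lt_succ_iff.1 hib)) (hbmin i ⟨hi.2, hu⟩)) hi.1
  have hSb : S = insert b (S.erase b) := (Finset.insert_erase hb.1).symm
  obtain ⟨a, ha⟩ : ((S.erase b).filter fun i : Fin n => (i : ℕ) < b + 1).Nonempty := by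
    have h1 := hS.1 (b + 1)
    rw [hSb, height_insert (Finset.notMem_erase b S), height_eq_card hl,
      if_pos (Nat.lt_succ_self _), hb.2, Brkt.sign] at h1
    rw [← Finset.card_pos]
    omega
  rw [Finset.mem_filter] at ha
  have hab : a < b := lt_of_le_of_ne (Nat.lt_succ_iff.1 ha.2) (Finset.ne_of_mem_erase ha.1)
  set S' := (S.erase b).erase a
  have hS' : S = insert a (insert b S') := by
    rw [Finset.insert_comm, Finset.insert_erase ha.1, ← hSb]
  have haS' : a ∉ S' := Finset.notMem_erase a _
  have hbS' : b ∉ S' := fun h => Finset.notMem_erase b S (Finset.mem_of_mem_erase h)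
  have hua : u a = .l := hl a ha.1 ha.2
  have hfar : ∀ t, (b : ℕ) < t → height u S' t = height u S t := by
    intro t hbt
    rw [hS', height_insert_insert hab haS' hbS', if_pos (lt_trans (Fin.lt_def.1 hab) hbt),
      if_pos hbt, hua, hb.2]
    simp only [Brkt.sign]
    ring
  refine ⟨a, b, S', hab, hua, hb.2, haS', hbS', hS', fun t => ?_, hfar n b.isLt ▸ hS.2⟩
  by_cases hbt : (b : ℕ) < t
  · exact hfar t hbt ▸ hS.1 t
  · rw [height_eq_card fun i hi hit => hl i (Finset.mem_of_mem_erase hi) (by omega)]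
    exact Nat.cast_nonneg _

end Balanced

lemma height_get_univ (w : List Brkt) (t : ℕ) :
    height w.get Finset.univ t = (w.take t).count .l - (w.take t).count .r := by
  induction w generalizing t with
  | nil => simp [height]
  | cons x w ih =>
    cases t with
    | zero => simp [height]
    | succ t =>
      have ih := ih t
      rw [height, Finset.sum_filter] at ih ⊢
      erw [Fin.sum_univ_succ]
      have hget (i : Fin w.length) : (x :: w).get i.succ = w.get i := rfl
      simp only [hget, Fin.val_succ, Nat.add_lt_add_iff_right, ih, List.take_succ_cons,
        List.count_cons]
      cases x <;> simp [Brkt.sign] <;> ring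

lemma isBalanced_get_univ_iff (w : List Brkt) :
    IsBalanced w.get Finset.univ ↔
      w.count .l = w.count .r ∧ ∀ t, (w.take t).count .r ≤ (w.take t).count .l := by
  simp only [IsBalanced, height_get_univ, List.take_length, sub_nonneg, sub_eq_zero, Nat.cast_le,
    Nat.cast_inj]
  exact and_comm

section Automaton
variable {n : ℕ} {u : Fin n → Brkt}

lemma dyckPIA_step_cases {c c' : PIAConfig dyckPIA n} (h : PIAStep dyckPIA u c c') :
    (c.q = true ∧ c'.q = false ∧
      ∃ ℓ, ℓ ∉ c.N ∧ u ℓ = .l ∧ c'.ρ (0 : Fin 1) = some ℓ ∧ c'.N = insert ℓ c.N) ∨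
    (c.q = false ∧ c'.q = true ∧
      ∃ p ℓ, c.ρ (0 : Fin 1) = some p ∧ p < ℓ ∧ ℓ ∉ c.N ∧ u ℓ = .r ∧ c'.N = insert ℓ c.N) := by
  rcases h with ⟨hsilent, -⟩ | ⟨k, i, j, ℓ, hmove, hℓ, hleft, -, hρ, hN⟩
  · exact hsilent.elim
  obtain rfl : k = (0 : Fin 1) := Subsingleton.elim (α := Fin 1) _ _
  rcases hmove with ⟨hq, rfl, -, hu, hq'⟩ | ⟨hq, rfl, -, hu, hq'⟩
  · exact Or.inl ⟨hq, hq', ℓ, hℓ, hu, by rw [hρ]; exact Function.update_self .., hN⟩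
  · obtain ⟨p, hp, hpℓ⟩ := hleft
    exact Or.inr ⟨hq, hq', p, ℓ, hp, hpℓ, hℓ, hu, hN⟩

variable (u) in
def DyckInvariant (c : PIAConfig dyckPIA n) : Prop :=
  ∃ S : Finset (Fin n), IsBalanced u S ∧
    (c.q = true ∧ c.N = ↑S ∨
      c.q = false ∧ ∃ p, c.ρ (0 : Fin 1) = some p ∧ u p = .l ∧ p ∉ S ∧ c.N = insert p ↑S)

lemma DyckInvariant.step {c c' : PIAConfig dyckPIA n} (hc : DyckInvariant u c)
    (h : PIAStep dyckPIA u c c') : DyckInvariant u c' := by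
  obtain ⟨S, hS, ⟨hq, hN⟩ | ⟨hq, p, hp, hpl, hpS, hN⟩⟩ := hc <;>
    rcases dyckPIA_step_cases h with
      ⟨hq₁, hq', ℓ, hℓ, hu, hρ, hN'⟩ | ⟨hq₁, hq', p', ℓ, hp', hpℓ, hℓ, hu, hN'⟩
  · exact ⟨S, hS, Or.inr ⟨hq', ℓ, hρ, hu, by rwa [hN] at hℓ, by rw [hN', hN]⟩⟩
  · simp [hq] at hq₁
  · simp [hq] at hq₁
  · rw [hp, Option.some_inj] at hp'
    subst hp'
    rw [hN, Set.mem_insert_iff, not_or] at hℓ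
    refine ⟨insert p (insert ℓ S), hS.insert_insert hpℓ hpl hu hpS (by exact_mod_cast hℓ.2),
      Or.inl ⟨hq', ?_⟩⟩
    rw [hN', hN, Finset.coe_insert, Finset.coe_insert, Set.insert_comm]

lemma DyckInvariant.of_reflTransGen {c : PIAConfig dyckPIA n}
    (h : Relation.ReflTransGen (PIAStep dyckPIA u) (PIAInit dyckPIA n) c) : DyckInvariant u c := by
  induction h with
  | refl => exact ⟨∅, isBalanced_empty, Or.inl ⟨rfl, by simp [PIAInit]⟩⟩
  | tail _ hstep ih => exact ih.step hstep

lemma DyckInvariant.isBalanced_univ {c : PIAConfig dyckPIA n} (hc : DyckInvariant u c)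
    (hq : c.q = true) (hN : c.N = Set.univ) : IsBalanced u Finset.univ := by
  obtain ⟨S, hS, ⟨-, hSN⟩ | ⟨hq', -⟩⟩ := hc
  · rwa [← Finset.coe_eq_univ.1 (hSN ▸ hN)]
  · simp [hq] at hq'

lemma dyckPIA_reflTransGen_pair {a b : Fin n} (hab : a < b) (ha : u a = .l) (hb : u b = .r)
    {N : Set (Fin n)} (haN : a ∉ N) (hbN : b ∉ N) (ρ : Fin dyckPIA.m → Option (Fin n)) :
    Relation.ReflTransGen (PIAStep dyckPIA u) ⟨true, ρ, N⟩
      ⟨true, Function.update (Function.update ρ (0 : Fin 1) (some a)) (0 : Fin 1) (some b),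
        insert b (insert a N)⟩ :=
  .head (b := ⟨false, Function.update ρ (0 : Fin 1) (some a), insert a N⟩)
    (Or.inr ⟨(0 : Fin 1), none, none, a, Or.inl ⟨rfl, rfl, rfl, ha, rfl⟩, haN, trivial, trivial,
      rfl, rfl⟩)
    (.single (Or.inr ⟨(0 : Fin 1), some (0 : Fin 1), none, b, Or.inr ⟨rfl, rfl, rfl, hb, rfl⟩,
      fun h => (Set.mem_insert_iff.1 h).elim hab.ne' hbN,
      ⟨a, Function.update_self (0 : Fin 1) _ ρ, hab⟩, trivial, rfl, rfl⟩))

lemma IsBalanced.exists_reflTransGen_univ {S : Finset (Fin n)} (hS : IsBalanced u S)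
    (ρ : Fin dyckPIA.m → Option (Fin n)) :
    ∃ ρ', Relation.ReflTransGen (PIAStep dyckPIA u) ⟨true, ρ, (↑S)ᶜ⟩ ⟨true, ρ', Set.univ⟩ := by
  induction S using Finset.strongInduction generalizing ρ with
  | H S ih =>
  obtain rfl | hne := S.eq_empty_or_nonempty
  · exact ⟨ρ, by simpa using Relation.ReflTransGen.refl⟩
  obtain ⟨a, b, S', hab, ha, hb, haS', hbS', rfl, hS'⟩ := hS.exists_insert_insert hne
  have hsub : S' ⊂ insert a (insert b S') :=
    (Finset.ssubset_insert hbS').trans_le (Finset.subset_insert _ _)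
  obtain ⟨ρ', hrun⟩ := ih S' hsub hS' _
  refine ⟨ρ', .trans ?_ hrun⟩
  convert dyckPIA_reflTransGen_pair hab ha hb (N := (↑(insert a (insert b S')))ᶜ) (by simp)
    (by simp) ρ using 3
  ext
  simp only [Finset.coe_insert, Set.mem_compl_iff, Set.mem_insert_iff, Finset.mem_coe]
  grind

end Automaton

/-- `dyckPIA` accepts a string iff it has equally many left and right brackets
and no prefix has more right than left brackets. -/
theorem dyckPIA_accepts_iff (w : List Brkt) :
    dyckPIA.Accepts w ↔
      (w.count Brkt.l = w.count Brkt.r ∧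
       ∀ n : ℕ, (w.take n).count Brkt.r ≤ (w.take n).count Brkt.l) := by
  rw [← isBalanced_get_univ_iff]
  constructor
  · rintro ⟨c, hrun, hq, hN⟩
    exact (DyckInvariant.of_reflTransGen hrun).isBalanced_univ hq hN
  · intro h
    obtain ⟨ρ, hrun⟩ := h.exists_reflTransGen_univ fun _ => none
    exact ⟨⟨true, ρ, Set.univ⟩, by simpa [PIAInit, dyckPIA] using hrun, rfl, rfl⟩
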